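/- arXiv:1709.07630 — 6 statements merged into one kernel-verified Lean document; each statement's English description precedes it below -/
import Mathlib

section
/- Let M₁,...,Mₙ be i.i.d. nonnegative integer-valued random variables with common probability generating function φ, and let i ≥ 1. Then E[(M₁)_i / (Σ_{l=1}^n M_l)_i] = (1/Γ(i)) ∫₀¹ (1-z)^(i-1) φ(z)^(n-1) φ^(i)(z) dz, with the convention that the ratio is 0 when Σ M_l < i (interpreting (m)_i/( s)_i with s ≥ m appropriately: the summand (m₁)_i/(m₁+m)_i vanishes when m₁ < i). -/
/-! For `1 ≤ i ≤ s` the Beta integral gives `∫₀¹ z^(s-i) (1-z)^(i-1) dz = (i-1)! / (s)_i`, so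
`(i-1)! · (m₁)_i / (s)_i` is the integral of `(m₁)_i z^(s-i) (1-z)^(i-1)`, which vanishes when
`m₁ < i`. Summing against the law `∏ p(m_l)` of `(M₁, …, Mₙ)` with `s = ∑ m_l`, the series under the
integral factors as `φ^(i)(z) φ(z)^(n-1)`, the first factor coming from differentiating the power
series `φ` termwise. All terms are nonnegative, so sum and integral commute. -/

open MeasureTheory Set

section PowerSeries

variable {𝕜 : Type*} [RCLike 𝕜]

theorem summable_descFactorial_mul_pow_sub (k : ℕ) {r : 𝕜} (hr : ‖r‖ < 1) :
    Summable (fun m : ℕ => (m.descFactorial k : 𝕜) * r ^ (m - k)) := by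
  rw [← summable_nat_add_iff k]
  simpa using summable_descFactorial_mul_geometric_of_norm_lt_one k hr

variable {a : ℕ → 𝕜} {C : ℝ}

theorem summable_mul_descFactorial_mul_pow_sub (ha : ∀ m, ‖a m‖ ≤ C) (k : ℕ) {z : 𝕜}
    (hz : ‖z‖ < 1) : Summable (fun m => a m * m.descFactorial k * z ^ (m - k)) := by
  refine .of_norm_bounded ((summable_descFactorial_mul_pow_sub k (r := (‖z‖ : 𝕜))
    (by simpa using hz)).norm.mul_left C) fun m => ?_
  simp only [norm_mul, norm_pow, RCLike.norm_natCast, RCLike.norm_ofReal, abs_norm, mul_assoc]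
  gcongr
  exact ha m

theorem hasDerivAt_tsum_mul_descFactorial_mul_pow_sub (ha : ∀ m, ‖a m‖ ≤ C) (k : ℕ) {z : 𝕜}
    (hz : ‖z‖ < 1) :
    HasDerivAt (fun w => ∑' m, a m * m.descFactorial k * w ^ (m - k))
      (∑' m, a m * m.descFactorial (k + 1) * z ^ (m - (k + 1))) z := by
  obtain ⟨r, hzr, hr⟩ := exists_between hz
  have hr0 : 0 < r := (norm_nonneg z).trans_lt hzr
  refine hasDerivAt_tsum_of_isPreconnected (g := fun m w => a m * m.descFactorial k * w ^ (m - k))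
    (g' := fun m w => a m * m.descFactorial (k + 1) * w ^ (m - (k + 1)))
    ((summable_mul_descFactorial_mul_pow_sub (a := fun _ => (C : 𝕜)) (C := |C|) (by simp) (k + 1)
      (z := (r : 𝕜)) (by simpa [abs_of_pos hr0] using hr)).norm)
    Metric.isOpen_ball (convex_ball (0 : 𝕜) r).isPreconnected (fun m y _ => ?_) (fun m y hy => ?_)
    (Metric.mem_ball_self hr0) ?_ (by simpa using hzr)
  · have h := (hasDerivAt_pow (m - k) y).const_mul (a m * m.descFactorial k)
    refine h.congr_deriv ?_
    rw [show m - (k + 1) = m - k - 1 by omega, Nat.descFactorial_succ]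
    push_cast
    ring
  · have hy : ‖y‖ ≤ r := by simpa using (Metric.mem_ball.1 hy).le
    simp only [norm_mul, norm_pow, RCLike.norm_natCast, RCLike.norm_ofReal, abs_of_pos hr0]
    gcongr
    exact (ha m).trans (le_abs_self C)
  · refine summable_of_ne_finset_zero (s := Finset.range (k + 1)) fun m hm => ?_
    rw [Finset.mem_range, not_lt] at hm
    simp [zero_pow (by omega : m - k ≠ 0)]

theorem iteratedDeriv_tsum_mul_pow (ha : ∀ m, ‖a m‖ ≤ C) (k : ℕ) {z : 𝕜} (hz : ‖z‖ < 1) :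
    iteratedDeriv k (fun w => ∑' m, a m * w ^ m) z =
      ∑' m, a m * m.descFactorial k * z ^ (m - k) := by
  induction k generalizing z with
  | zero => simp
  | succ k ih =>
    have hball : Metric.ball (0 : 𝕜) 1 ∈ nhds z := Metric.isOpen_ball.mem_nhds (by simpa using hz)
    have heq : iteratedDeriv k (fun w => ∑' m, a m * w ^ m)
        =ᶠ[nhds z] fun w => ∑' m, a m * m.descFactorial k * w ^ (m - k) := by
      filter_upwards [hball] with w hw using ih (by simpa using hw)
    rw [iteratedDeriv_succ, heq.deriv_eq]
    exact (hasDerivAt_tsum_mul_descFactorial_mul_pow_sub ha k hz).deriv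

end PowerSeries

theorem integral_pow_mul_one_sub_pow (a b : ℕ) :
    ∫ x in (0 : ℝ)..1, x ^ a * (1 - x) ^ b =
      (a.factorial : ℝ) * b.factorial / (a + b + 1).factorial := by
  have hB : Complex.betaIntegral (a + 1) (b + 1) =
      ((∫ x in (0 : ℝ)..1, x ^ a * (1 - x) ^ b : ℝ) : ℂ) := by
    rw [Complex.betaIntegral, ← intervalIntegral.integral_ofReal]
    refine intervalIntegral.integral_congr fun x _ => ?_
    simp only [add_sub_cancel_right, Complex.cpow_natCast]
    push_cast
    rfl
  have hΓ := Complex.betaIntegral_eq_Gamma_mul_div (a + 1) (b + 1)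
    (by simpa using a.cast_add_one_pos) (by simpa using b.cast_add_one_pos)
  rw [hB, show (a + 1 : ℂ) + (b + 1) = ((a + b + 1 : ℕ) : ℂ) + 1 by push_cast; ring] at hΓ
  simp only [Complex.Gamma_nat_eq_factorial] at hΓ
  apply Complex.ofReal_injective
  rw [hΓ]
  push_cast
  rfl

theorem integral_pow_sub_mul_one_sub_pow_pred {s i : ℕ} (hi : 1 ≤ i) (his : i ≤ s) :
    ∫ x in (0 : ℝ)..1, x ^ (s - i) * (1 - x) ^ (i - 1) =
      ((i - 1).factorial : ℝ) / s.descFactorial i := by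
  rw [integral_pow_mul_one_sub_pow, show s - i + (i - 1) + 1 = s by omega,
    ← Nat.factorial_mul_descFactorial his]
  have : (s.descFactorial i : ℝ) ≠ 0 := by
    exact_mod_cast (Nat.descFactorial_pos.2 his).ne'
  push_cast
  field_simp

theorem descFactorial_mul_integral_pow_sub_mul_one_sub_pow_pred {a s i : ℕ} (hi : 1 ≤ i)
    (has : a ≤ s) :
    a.descFactorial i * ∫ x in (0 : ℝ)..1, x ^ (s - i) * (1 - x) ^ (i - 1)
      = (i - 1).factorial * ((a.descFactorial i : ℝ) / s.descFactorial i) := by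
  rcases lt_or_ge a i with hai | hia
  · simp [Nat.descFactorial_eq_zero_iff_lt.2 hai]
  · rw [integral_pow_sub_mul_one_sub_pow_pred hi (hia.trans has)]
    ring

theorem hasSum_intervalIntegral_of_nonneg {ι : Type*} [Countable ι] {F : ι → ℝ → ℝ} {f : ℝ → ℝ}
    {a b : ℝ} (hab : a ≤ b) (hF : ∀ i, ContinuousOn (F i) (Icc a b))
    (hF0 : ∀ i, ∀ x ∈ Ioo a b, 0 ≤ F i x) (hsum : Summable fun i => ∫ x in a..b, F i x)
    (hf : ∀ x ∈ Ioo a b, HasSum (fun i => F i x) (f x)) :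
    HasSum (fun i => ∫ x in a..b, F i x) (∫ x in a..b, f x) := by
  simp only [intervalIntegral.integral_of_le hab, integral_Ioc_eq_integral_Ioo] at hsum ⊢
  have hnorm : ∀ i, ∫ x in Ioo a b, ‖F i x‖ = ∫ x in Ioo a b, F i x := fun i =>
    setIntegral_congr_fun measurableSet_Ioo fun x hx => Real.norm_of_nonneg (hF0 i x hx)
  have h := hasSum_integral_of_summable_integral_norm
    (fun i => (hF i).integrableOn_Icc.mono_set Ioo_subset_Icc_self)
    (hsum.congr fun i => (hnorm i).symm)
  rwa [setIntegral_congr_fun measurableSet_Ioo fun x hx => (hf x hx).tsum_eq] at h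

theorem hasSum_prod_fin_pi_of_nonneg {ι : Type*} {g : ι → ℝ} {s : ℝ} (hg0 : ∀ m, 0 ≤ g m)
    (hg : HasSum g s) (k : ℕ) : HasSum (fun f : Fin k → ι => ∏ l, g (f l)) (s ^ k) := by
  induction k with
  | zero =>
    simpa only [Fin.prod_univ_zero, pow_zero] using hasSum_unique fun _ : Fin 0 → ι => (1 : ℝ)
  | succ k ih =>
    have hprod := hg.summable.mul_of_nonneg ih.summable (Pi.le_def.2 hg0)
      (Pi.le_def.2 fun f => Finset.prod_nonneg fun l _ => hg0 (f l))
    rw [← (Fin.consEquiv fun _ => ι).hasSum_iff, pow_succ']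
    refine (hg.mul ih hprod).congr_fun fun x => ?_
    simp [Fin.consEquiv, Fin.prod_univ_succ]

namespace PMF

theorem hasSum_toReal {α : Type*} (p : PMF α) : HasSum (fun a => (p a).toReal) 1 := by
  simpa [← ENNReal.tsum_toReal_eq p.apply_ne_top] using ENNReal.hasSum_toReal p.tsum_coe_ne_top

theorem toReal_apply_le_one {α : Type*} (p : PMF α) (a : α) : (p a).toReal ≤ 1 :=
  ENNReal.toReal_le_of_le_ofReal zero_le_one (by simpa using p.coe_le_one a)

variable (p : PMF ℕ)

theorem hasSum_prod_toReal_mul_pow {z : ℝ} (hz0 : 0 ≤ z) (hz1 : z ≤ 1) (k : ℕ) :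
    HasSum (fun f : Fin k → ℕ => (∏ l, (p (f l)).toReal) * z ^ ∑ l, f l)
      ((∑' m, (p m).toReal * z ^ m) ^ k) := by
  have hg : Summable fun m => (p m).toReal * z ^ m :=
    p.hasSum_toReal.summable.of_nonneg_of_le (fun m => by positivity)
      fun m => mul_le_of_le_one_right ENNReal.toReal_nonneg (pow_le_one₀ hz0 hz1)
  refine (hasSum_prod_fin_pi_of_nonneg (fun m => by positivity) hg.hasSum k).congr_fun fun f => ?_
  rw [Finset.prod_mul_distrib, Finset.prod_pow_eq_pow_sum]

theorem hasSum_prod_toReal_mul_descFactorial_mul_pow (n i : ℕ) {z : ℝ} (hz : z ∈ Ioo 0 1) :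
    HasSum (fun f : Fin (n + 1) → ℕ =>
        (∏ l, (p (f l)).toReal) * (f 0).descFactorial i * z ^ ((∑ l, f l) - i))
      (iteratedDeriv i (fun w => ∑' m, (p m).toReal * w ^ m) z *
        (∑' m, (p m).toReal * z ^ m) ^ n) := by
  have hz1 : ‖z‖ < 1 := by rw [Real.norm_of_nonneg hz.1.le]; exact hz.2
  have hcoeff : ∀ m, ‖(p m).toReal‖ ≤ 1 := fun m => by
    rw [Real.norm_of_nonneg ENNReal.toReal_nonneg]; exact p.toReal_apply_le_one m
  have hderiv : HasSum (fun m => (p m).toReal * m.descFactorial i * z ^ (m - i))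
      (iteratedDeriv i (fun w => ∑' m, (p m).toReal * w ^ m) z) := by
    rw [iteratedDeriv_tsum_mul_pow hcoeff i hz1]
    exact (summable_mul_descFactorial_mul_pow_sub hcoeff i hz1).hasSum
  have hpow := p.hasSum_prod_toReal_mul_pow hz.1.le hz.2.le n
  have hprod := hderiv.summable.mul_of_nonneg hpow.summable
    (Pi.le_def.2 fun m => by have := hz.1; positivity)
    (Pi.le_def.2 fun f => by have := hz.1; positivity)
  rw [← (Fin.consEquiv fun _ => ℕ).hasSum_iff]
  refine (hderiv.mul hpow hprod).congr_fun ?_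
  rintro ⟨m, f⟩
  simp only [Function.comp_apply, Fin.consEquiv, Equiv.coe_fn_mk, Fin.prod_univ_succ,
    Fin.sum_univ_succ, Fin.cons_zero, Fin.cons_succ]
  rcases lt_or_ge m i with hmi | him
  · simp [Nat.descFactorial_eq_zero_iff_lt.2 hmi]
  · rw [show m + ∑ l, f l - i = m - i + ∑ l, f l by omega, pow_add]
    ring

theorem summable_prod_toReal_mul_descFactorial_div (n i : ℕ) :
    Summable fun f : Fin (n + 1) → ℕ =>
      (∏ l, (p (f l)).toReal) * ((f 0).descFactorial i / (∑ l, f l).descFactorial i : ℝ) := by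
  have hw0 : ∀ f : Fin (n + 1) → ℕ, 0 ≤ ∏ l, (p (f l)).toReal := fun f => by positivity
  refine (p.hasSum_prod_toReal_mul_pow zero_le_one le_rfl (n + 1)).summable.of_nonneg_of_le
    (fun f => mul_nonneg (hw0 f) (by positivity)) fun f => ?_
  rw [one_pow, mul_one]
  refine mul_le_of_le_one_right (hw0 f) (div_le_one_of_le₀ ?_ (by positivity))
  exact_mod_cast Nat.descFactorial_le i
    (Finset.single_le_sum_of_canonicallyOrdered (Finset.mem_univ 0))

end PMF

/-- For `M₁,...,Mₙ` i.i.d. with common pgf `φ` and `i ≥ 1`,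
`E[(M₁)_i / (Σ M_l)_i] = (1/Γ(i)) ∫₀¹ (1-z)^(i-1) φ(z)^(n-1) φ^(i)(z) dz`,
the ratio being `0` when the denominator falling factorial vanishes. -/
theorem stmt_1 (p : PMF ℕ) (n i : ℕ) (hn : 1 ≤ n) (hi : 1 ≤ i) :
    (∑' f : Fin n → ℕ, (∏ l, (p (f l)).toReal) *
        (((f ⟨0, hn⟩).descFactorial i : ℝ) / ((∑ l, f l).descFactorial i : ℝ)))
      = (1 / (Nat.factorial (i - 1) : ℝ)) *
        ∫ z in (0:ℝ)..1, (1 - z) ^ (i - 1) *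
          ((fun w => ∑' m : ℕ, (p m).toReal * w ^ m) z) ^ (n - 1) *
          iteratedDeriv i (fun w => ∑' m : ℕ, (p m).toReal * w ^ m) z := by
  obtain ⟨n, rfl⟩ := Nat.exists_eq_add_of_le' hn
  set w : (Fin (n + 1) → ℕ) → ℝ := fun f => ∏ l, (p (f l)).toReal
  have hintegral : ∀ f : Fin (n + 1) → ℕ, ∫ z in (0 : ℝ)..1,
      w f * (f 0).descFactorial i * (z ^ ((∑ l, f l) - i) * (1 - z) ^ (i - 1))
        = (i - 1).factorial * (w f * ((f 0).descFactorial i / (∑ l, f l).descFactorial i : ℝ)) := by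
    intro f
    rw [intervalIntegral.integral_const_mul, mul_assoc,
      descFactorial_mul_integral_pow_sub_mul_one_sub_pow_pred hi
        (Finset.single_le_sum_of_canonicallyOrdered (Finset.mem_univ 0))]
    ring
  have hswap := hasSum_intervalIntegral_of_nonneg
    (F := fun f z => w f * (f 0).descFactorial i * (z ^ ((∑ l, f l) - i) * (1 - z) ^ (i - 1)))
    zero_le_one (fun f => by fun_prop)
    (fun f z hz => by have := hz.1; have := hz.2; positivity)
    (by simpa only [hintegral] using (p.summable_prod_toReal_mul_descFactorial_div n i).mul_left _)
    fun z hz => ((p.hasSum_prod_toReal_mul_descFactorial_mul_pow n i hz).mul_right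
      ((1 - z) ^ (i - 1))).congr_fun fun f => by ring
  simp only [hintegral] at hswap
  rw [eq_comm, one_div, inv_mul_eq_iff_eq_mul₀ (by positivity), ← tsum_mul_left, Nat.add_sub_cancel]
  convert hswap.tsum_eq.symm using 1
  · congr 1 with z
    ring
  · rfl
end

section
/- For the geometric BGW process with offspring pgf φ(z) = q/(1−pz), mean μ = p/q ≠ 1, one founder: P(τ_{N_t(1),1}^{(t)}(1) ≥ k | N_t(1) > 0) = (μ^{t+1} − μ^k)/(μ^k(μ^{t+1} − 1)) for 0 ≤ k ≤ t−1, where τ_{N_t(1),1}^{(t)}(1) is the coalescence time of the whole generation-t population. -/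
/-!
Writing `p = μ/(1+μ)`, `q = 1/(1+μ)`, the generating function is the Möbius map
`φ(w) = 1/(1 + μ - μ w)`, whose orbit from `0` is `P(N_n = 0) = (μⁿ - 1)/(μⁿ⁺¹ - 1)`.
Along this orbit `φ'(P(N_n = 0)) = μ (dₙ/dₙ₊₁)²` with `dₙ = μⁿ⁺¹ - 1`, so by the chain rule the
derivative of `φ^[k]` at `P(N_m = 0)` telescopes to `μᵏ (dₘ/dₘ₊ₖ)²`, and the tail probability
collapses to `dₘ/dₘ₊ₖ` with `m = t - k`.
-/

noncomputable def geomPgf (μ w : ℝ) : ℝ := 1 / (1 + μ - μ * w)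

noncomputable def extinctionProb (μ : ℝ) (n : ℕ) : ℝ := (μ ^ n - 1) / (μ ^ (n + 1) - 1)

section

variable {μ : ℝ}

lemma pow_succ_sub_one_ne_zero (hμ0 : 0 ≤ μ) (hμ1 : μ ≠ 1) (n : ℕ) : μ ^ (n + 1) - 1 ≠ 0 :=
  sub_ne_zero.2 fun h => hμ1 ((pow_eq_one_iff_of_nonneg hμ0 n.succ_ne_zero).1 h)

lemma one_add_sub_mul_extinctionProb (hμ0 : 0 ≤ μ) (hμ1 : μ ≠ 1) (n : ℕ) :
    1 + μ - μ * extinctionProb μ n = (μ ^ (n + 2) - 1) / (μ ^ (n + 1) - 1) := by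
  have := pow_succ_sub_one_ne_zero hμ0 hμ1 n
  rw [extinctionProb]
  field_simp
  ring

lemma one_sub_extinctionProb (hμ0 : 0 ≤ μ) (hμ1 : μ ≠ 1) (n : ℕ) :
    1 - extinctionProb μ n = μ ^ n * (μ - 1) / (μ ^ (n + 1) - 1) := by
  have := pow_succ_sub_one_ne_zero hμ0 hμ1 n
  rw [extinctionProb]
  field_simp
  ring

lemma geomPgf_extinctionProb (hμ0 : 0 ≤ μ) (hμ1 : μ ≠ 1) (n : ℕ) :
    geomPgf μ (extinctionProb μ n) = extinctionProb μ (n + 1) := by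
  rw [geomPgf, one_add_sub_mul_extinctionProb hμ0 hμ1, extinctionProb, one_div_div]

lemma geomPgf_iterate_zero (hμ0 : 0 ≤ μ) (hμ1 : μ ≠ 1) (n : ℕ) :
    (geomPgf μ)^[n] 0 = extinctionProb μ n := by
  induction n with
  | zero => simp [extinctionProb]
  | succ n ih => rw [Function.iterate_succ_apply', ih, geomPgf_extinctionProb hμ0 hμ1]

lemma hasDerivAt_geomPgf {w : ℝ} (hw : 1 + μ - μ * w ≠ 0) :
    HasDerivAt (geomPgf μ) (μ / (1 + μ - μ * w) ^ 2) w := by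
  have hden : HasDerivAt (fun w => 1 + μ - μ * w) (-μ) w := by
    simpa using ((hasDerivAt_id w).const_mul μ).const_sub (1 + μ)
  exact ((hasDerivAt_const w (1 : ℝ)).div hden hw).congr_deriv (by ring)

lemma hasDerivAt_geomPgf_iterate (hμ0 : 0 ≤ μ) (hμ1 : μ ≠ 1) (j n : ℕ) :
    HasDerivAt (geomPgf μ)^[j]
      (μ ^ j * ((μ ^ (n + 1) - 1) / (μ ^ (n + j + 1) - 1)) ^ 2) (extinctionProb μ n) := by
  induction j generalizing n with
  | zero =>
    simpa [div_self (pow_succ_sub_one_ne_zero hμ0 hμ1 n)] using hasDerivAt_id _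
  | succ j ih =>
    have hE := pow_succ_sub_one_ne_zero hμ0 hμ1
    have hden := one_add_sub_mul_extinctionProb hμ0 hμ1 n
    have hφ := hasDerivAt_geomPgf (hden ▸ div_ne_zero (hE (n + 1)) (hE n))
    have hφj := ih (n + 1)
    rw [← geomPgf_extinctionProb hμ0 hμ1] at hφj
    have hcomp := hφj.comp _ hφ
    rw [← Function.iterate_succ] at hcomp
    refine hcomp.congr_deriv ?_
    rw [hden, show n + 1 + j + 1 = n + (j + 1) + 1 by omega]
    have hEn1 := hE (n + 1)
    have hEnj := hE (n + (j + 1))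
    field_simp
    ring

theorem geomPgf_coalescence_tail (hμ0 : 0 < μ) (hμ1 : μ ≠ 1) (m k : ℕ) :
    (1 - (geomPgf μ)^[m] 0) / (1 - (geomPgf μ)^[m + k] 0) *
        deriv (geomPgf μ)^[k] ((geomPgf μ)^[m] 0)
      = (μ ^ (m + k + 1) - μ ^ k) / (μ ^ k * (μ ^ (m + k + 1) - 1)) := by
  rw [geomPgf_iterate_zero hμ0.le hμ1, geomPgf_iterate_zero hμ0.le hμ1,
    (hasDerivAt_geomPgf_iterate hμ0.le hμ1 k m).deriv, one_sub_extinctionProb hμ0.le hμ1,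
    one_sub_extinctionProb hμ0.le hμ1]
  have hEm := pow_succ_sub_one_ne_zero hμ0.le hμ1 m
  have hEt := pow_succ_sub_one_ne_zero hμ0.le hμ1 (m + k)
  have hμ1' := sub_ne_zero.2 hμ1
  have hμ0' := hμ0.ne'
  field_simp
  ring

end

lemma div_one_sub_mul_eq_geomPgf {p q μ : ℝ} (hq : q = 1 - p) (hq0 : q ≠ 0) (hμ : μ = p / q) :
    (fun w => q / (1 - p * w)) = geomPgf μ := by
  funext w
  rw [geomPgf, ← one_div_div, hμ]
  congr 1
  field_simp
  linear_combination -hq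

theorem stmt_11_general (p q μ : ℝ) (hp : p ∈ Set.Ioo (0:ℝ) 1) (hq : q = 1 - p)
    (hμ : μ = p / q) (hμ1 : μ ≠ 1) (t k : ℕ) (hk : k ≤ t - 1) :
    ((1 - (fun w => q / (1 - p * w))^[t - k] 0) /
        (1 - (fun w => q / (1 - p * w))^[t] 0)) *
      deriv ((fun w => q / (1 - p * w))^[k]) ((fun w => q / (1 - p * w))^[t - k] 0)
      = (μ ^ (t + 1) - μ ^ k) / (μ ^ k * (μ ^ (t + 1) - 1)) := by
  obtain ⟨hp0, hp1⟩ := hp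
  have hq0 : 0 < q := by linarith
  rw [div_one_sub_mul_eq_geomPgf hq hq0.ne' hμ]
  obtain ⟨m, rfl⟩ : ∃ m, t = m + k := ⟨t - k, by omega⟩
  rw [Nat.add_sub_cancel]
  exact geomPgf_coalescence_tail (by rw [hμ]; positivity) hμ1 m k

/-- geometric BGW, `φ(z)=q/(1-pz)`, `μ = p/q ≠ 1`, one founder.
By the general theorem,
`P(τ_{N_t(1),1}^{(t)}(1) ≥ k | N_t(1) > 0)
  = [P(N_{t-k}>0)/P(N_t>0)] · φ_k'(P(N_{t-k}=0))` with `P(N_s=0)=φ_s(0)`;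
this equals `(μ^{t+1}-μ^k)/(μ^k(μ^{t+1}-1))` for `0 ≤ k ≤ t-1`. -/
theorem stmt_11 (p q μ : ℝ) (hp : p ∈ Set.Ioo (0:ℝ) 1) (hq : q = 1 - p)
    (hμ : μ = p / q) (hμ1 : μ ≠ 1) (t k : ℕ) (ht : 1 ≤ t) (hk : k ≤ t - 1) :
    ((1 - (fun w => q / (1 - p * w))^[t - k] 0) /
        (1 - (fun w => q / (1 - p * w))^[t] 0)) *
      deriv ((fun w => q / (1 - p * w))^[k]) ((fun w => q / (1 - p * w))^[t - k] 0)
      = (μ ^ (t + 1) - μ ^ k) / (μ ^ k * (μ ^ (t + 1) - 1)) :=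
  stmt_11_general p q μ hp hq hμ hμ1 t k hk
end

section
/- For the critical geometric BGW process (μ = 1, φ(z) = (1/2)/(1 − z/2)) with one founder: P(τ_{i,1}^{(t)}(1) ≥ k | N_t(1) = i) = [(t−k)(t+1)/(t(t−k+1))]^{i−1} for 0 ≤ k ≤ t−1 and i ≥ 1. -/
/-!
The `s`-fold iterate of `φ(z) = 1/(2 - z)` is the Möbius map `(s - (s-1)z)/((s+1) - sz)`, whose
expansion in `z` is `s/(s+1) + ∑_{n ≥ 1} s^(n-1)/(s+1)^(n+1) z^n`. A probability generating
function determines its law (a power series with summable coefficients that vanishes on `(0,1)`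
is zero), so these are the laws of `N_s(1)`; and `(φ^[k])' = 1/((k+1) - kz)^2`. Evaluating at
`z = P(N_{t-k} = 0) = (t-k)/(t-k+1)` and simplifying gives the formula.
-/

open Filter Topology Set

local notation "φ" => fun w : ℝ => (1 / 2 : ℝ) / (1 - w / 2)

theorem one_le_succ_sub_mul {s z : ℝ} (hs : 0 ≤ s) (hz : z ≤ 1) : 1 ≤ (s + 1) - s * z := by
  nlinarith

theorem iterate_geomPgf_eq (s : ℕ) {z : ℝ} (hz : z ≤ 1) :
    φ^[s] z = (s - (s - 1) * z) / ((s + 1) - s * z) := by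
  induction s with
  | zero => simp
  | succ s ih =>
    have hD := one_le_succ_sub_mul (Nat.cast_nonneg s) hz
    have hD' := one_le_succ_sub_mul (Nat.cast_nonneg (s + 1)) hz
    rw [Function.iterate_succ_apply', ih]
    push_cast at hD' ⊢
    field_simp
    ring

theorem hasDerivAt_iterate_geomPgf (s : ℕ) {x : ℝ} (hx : x < 1) :
    HasDerivAt φ^[s] (1 / ((s + 1) - s * x) ^ 2) x := by
  have hD := one_le_succ_sub_mul (Nat.cast_nonneg s) hx.le
  have hmob : HasDerivAt (fun z : ℝ => (s - (s - 1) * z) / ((s + 1) - s * z))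
      ((-(s - 1) * ((s + 1) - s * x) - (s - (s - 1) * x) * -s) / ((s + 1) - s * x) ^ 2) x := by
    refine HasDerivAt.div ?_ ?_ (by linarith)
    · simpa using ((hasDerivAt_id x).const_mul ((s : ℝ) - 1)).const_sub (s : ℝ)
    · simpa using ((hasDerivAt_id x).const_mul (s : ℝ)).const_sub ((s : ℝ) + 1)
  refine (hmob.congr_of_eventuallyEq ?_).congr_deriv (by ring)
  filter_upwards [Iio_mem_nhds hx] with z hz using iterate_geomPgf_eq s (le_of_lt hz)

theorem abs_mul_pow_le_abs (c : ℝ) {z : ℝ} (hz : |z| ≤ 1) (n : ℕ) : |c * z ^ n| ≤ |c| := by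
  rw [abs_mul, abs_pow]
  exact mul_le_of_le_one_right (abs_nonneg c) (pow_le_one₀ (abs_nonneg z) hz)

theorem summable_mul_pow_of_abs_le_one {c : ℕ → ℝ} (hc : Summable c) {z : ℝ} (hz : |z| ≤ 1) :
    Summable fun n => c n * z ^ n :=
  hc.abs.of_norm_bounded fun n => abs_mul_pow_le_abs (c n) hz n

theorem continuousOn_tsum_mul_pow {c : ℕ → ℝ} (hc : Summable c) :
    ContinuousOn (fun z => ∑' n, c n * z ^ n) (Icc (-1) 1) :=
  continuousOn_tsum (fun n => (continuous_const.mul (continuous_pow n)).continuousOn) hc.abs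
    fun n _ hz => abs_mul_pow_le_abs (c n) (abs_le.2 hz) n

/-- If `c` vanishes below `n`, the series is `z ^ n` times a tail series, which is continuous at
`0` with value `c n`. -/
theorem eq_zero_of_tsum_mul_pow_eq_zero {c : ℕ → ℝ} (hc : Summable c)
    (h : ∀ z ∈ Ioo (0 : ℝ) 1, ∑' n, c n * z ^ n = 0) : c = 0 := by
  funext n
  induction n using Nat.strong_induction_on with
  | _ n ih =>
  have hc' : Summable fun m => c (m + n) := (summable_nat_add_iff n).2 hc
  have htail : ∀ z ∈ Ioo (0 : ℝ) 1, ∑' m, c (m + n) * z ^ m = 0 := by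
    intro z hz
    have hz' : |z| ≤ 1 := abs_le.2 ⟨by linarith [hz.1], hz.2.le⟩
    have hsum := (summable_mul_pow_of_abs_le_one hc hz').sum_add_tsum_nat_add n
    have hhead : ∑ m ∈ Finset.range n, c m * z ^ m = 0 := Finset.sum_eq_zero fun m hm => by
      rw [ih m (Finset.mem_range.1 hm), Pi.zero_apply, zero_mul]
    rw [hhead, zero_add, h z hz] at hsum
    simp_rw [pow_add, ← mul_assoc, tsum_mul_right] at hsum
    exact (mul_eq_zero.1 hsum).resolve_right (pow_ne_zero n hz.1.ne')
  have hcont : ContinuousAt (fun z => ∑' m, c (m + n) * z ^ m) 0 :=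
    (continuousOn_tsum_mul_pow hc').continuousAt (Icc_mem_nhds (by norm_num) (by norm_num))
  have hval : ∑' m, c (m + n) * (0 : ℝ) ^ m = c n := by
    rw [tsum_eq_single 0 fun m hm => by rw [zero_pow hm, mul_zero]]
    simp
  rw [← hval]
  refine tendsto_nhds_unique (l := 𝓝[>] (0 : ℝ)) (hcont.tendsto.mono_left nhdsWithin_le_nhds)
    (tendsto_const_nhds.congr' ?_)
  filter_upwards [Ioo_mem_nhdsGT (zero_lt_one' ℝ)] with z hz using (htail z hz).symm

/-- `P(N_s(1) = n)` for the critical geometric process. -/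
noncomputable def criticalGeometricProb : ℕ → ℕ → ℝ
  | s, 0 => s / (s + 1)
  | s, n + 1 => s ^ n / (s + 1) ^ (n + 2)

theorem hasSum_criticalGeometricProb_mul_pow (s : ℕ) {z : ℝ} (hz : |z| ≤ 1) :
    HasSum (fun n => criticalGeometricProb s n * z ^ n)
      ((s - (s - 1) * z) / ((s + 1) - s * z)) := by
  have hs : (0 : ℝ) < s + 1 := by positivity
  have hD := one_le_succ_sub_mul (Nat.cast_nonneg s) (abs_le.1 hz).2
  have hr : |s * z / (s + 1)| < 1 := by
    rw [abs_div, abs_mul, Nat.abs_cast, abs_of_pos hs, div_lt_one hs]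
    nlinarith [Nat.cast_nonneg (α := ℝ) s]
  have hgeo := (hasSum_geometric_of_abs_lt_one hr).mul_left (z / (s + 1) ^ 2)
  have hterm : (fun n => criticalGeometricProb s (n + 1) * z ^ (n + 1))
      = fun n => z / (s + 1) ^ 2 * (s * z / (s + 1)) ^ n := by
    funext n
    simp only [criticalGeometricProb]
    rw [div_pow, mul_pow]
    field_simp
    ring
  have hval : (s - (s - 1) * z) / ((s + 1) - s * z)
      - ∑ n ∈ Finset.range 1, criticalGeometricProb s n * z ^ n
      = z / (s + 1) ^ 2 * (1 - s * z / (s + 1))⁻¹ := by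
    simp only [Finset.range_one, Finset.sum_singleton, criticalGeometricProb, pow_zero, mul_one]
    field_simp
    ring
  have hshift : HasSum (fun n => criticalGeometricProb s (n + 1) * z ^ (n + 1))
      ((s - (s - 1) * z) / ((s + 1) - s * z)
        - ∑ n ∈ Finset.range 1, criticalGeometricProb s n * z ^ n) := by
    rw [hterm, hval]
    exact hgeo
  exact (hasSum_nat_add_iff' 1).1 hshift

theorem toReal_eq_criticalGeometricProb (ν : ℕ → PMF ℕ)
    (hν : ∀ s : ℕ, ∀ z ∈ Icc (0 : ℝ) 1, ∑' n : ℕ, (ν s n).toReal * z ^ n = φ^[s] z)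
    (s n : ℕ) : (ν s n).toReal = criticalGeometricProb s n := by
  have hb : Summable fun n => (ν s n).toReal :=
    ENNReal.summable_toReal ((ν s).tsum_coe ▸ ENNReal.one_ne_top)
  have ha : Summable (criticalGeometricProb s) := by
    simpa using (hasSum_criticalGeometricProb_mul_pow s (z := 1) (by simp)).summable
  have hdiff := eq_zero_of_tsum_mul_pow_eq_zero (hb.sub ha) fun z hz => by
    have hz' : |z| ≤ 1 := abs_le.2 ⟨by linarith [hz.1], hz.2.le⟩
    simp only [sub_mul]
    rw [(summable_mul_pow_of_abs_le_one hb hz').tsum_sub (summable_mul_pow_of_abs_le_one ha hz'),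
      hν s z (Ioo_subset_Icc_self hz), iterate_geomPgf_eq s hz.2.le,
      (hasSum_criticalGeometricProb_mul_pow s hz').tsum_eq, sub_self]
  exact sub_eq_zero.1 (congrFun hdiff n)

/-- critical geometric BGW (`φ(z) = (1/2)/(1-z/2)`), one founder,
laws `ν s` of `N_s(1)` with pgf `φ_s`.  Then for `0 ≤ k ≤ t-1`, `i ≥ 1`,
`P(τ_{i,1}^{(t)}(1) ≥ k | N_t(1)=i)
  = φ_k'(P(N_{t-k}=0)) · P(N_{t-k}=i)/P(N_t=i)
  = [(t-k)(t+1)/(t(t-k+1))]^{i-1}`. -/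
theorem stmt_12 (t k i : ℕ) (ht : 1 ≤ t) (hk : k ≤ t - 1) (hi : 1 ≤ i)
    (ν : ℕ → PMF ℕ)
    (hν : ∀ s : ℕ, ∀ z ∈ Set.Icc (0:ℝ) 1,
      (∑' n : ℕ, (ν s n).toReal * z ^ n) = (fun w => (1/2 : ℝ) / (1 - w / 2))^[s] z) :
    deriv ((fun w => (1/2 : ℝ) / (1 - w / 2))^[k]) ((ν (t - k) 0).toReal) *
        (ν (t - k) i).toReal / (ν t i).toReal
      = (((t : ℝ) - (k : ℝ)) * ((t : ℝ) + 1) /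
          ((t : ℝ) * ((t : ℝ) - (k : ℝ) + 1))) ^ (i - 1) := by
  obtain ⟨j, rfl⟩ : ∃ j, i = j + 1 := ⟨i - 1, by omega⟩
  set M : ℕ := t - k with hMdef
  have hM : (1 : ℝ) ≤ M := by exact_mod_cast (by omega : 1 ≤ M)
  have htM : (t : ℝ) - k = M := by rw [hMdef, Nat.cast_sub (by omega)]
  simp only [toReal_eq_criticalGeometricProb ν hν, criticalGeometricProb, Nat.add_sub_cancel]
  have hx : (M : ℝ) / (M + 1) < 1 := by
    rw [div_lt_one (by positivity)]; linarith
  have hden : ((k : ℝ) + 1) - k * (M / (M + 1)) = (t + 1) / (M + 1) := by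
    rw [show (t : ℝ) = M + k by linarith]
    field_simp
    ring
  rw [(hasDerivAt_iterate_geomPgf k hx).deriv, hden, htM]
  have ht0 : (0 : ℝ) < t := by exact_mod_cast ht
  simp only [div_pow, mul_pow]
  field_simp
  ring
end

section
/- For the Sibuya BGW process with φ(z) = 1 − λ(1−z)^α, α ∈ (0,1), λ ∈ (0,1], and n₀ ≥ 1 founders, the tail of the TMRCA of a random pair satisfies P(∞ > τ₂,₁^(t)(n₀) ≥ k) = (1 − α^{t−k})·(1 − (1−λ_t)^{n₀}) for 0 ≤ k ≤ t−1, where λ_t = λ^{(1−α^t)/(1−α)}. Hence P(τ₂,₁^(t)(n₀) < ∞) = (1 − (1−λ_t)^{n₀})(1 − α^t) and P(τ₂,₁^(t)(n₀) = k | τ < ∞) = α^{t−k−1}(1−α)/(1−α^t). -/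
/-!
The Sibuya family `1 - λ (1 - z)^α` is closed under composition, so the `s`-th iterate of `φ` is
`φ_s(z) = 1 - λ_s (1 - z)^{α^s}`. Hence `(1 - z) φ_s''/φ_s'` is the constant `1 - α^s`, the
integrand is `(1 - α^{t-k})` times `φ_t' φ_t^{n₀-1}`, and
`n₀ ∫₀¹ φ_t' φ_t^{n₀-1} = φ_t(1)^{n₀} - φ_t(0)^{n₀} = 1 - (1 - λ_t)^{n₀}`.
The conditional law of `τ` is the resulting telescoping quotient.
-/

open Set Filter Topology MeasureTheory

noncomputable def sibuyaPGF (lam α z : ℝ) : ℝ := 1 - lam * (1 - z) ^ α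

theorem sibuyaPGF_comp {lam μ α β z : ℝ} (hμ : 0 ≤ μ) (hz : z ≤ 1) :
    sibuyaPGF lam α (sibuyaPGF μ β z) = sibuyaPGF (lam * μ ^ α) (β * α) z := by
  have h1z : 0 ≤ 1 - z := by linarith
  simp only [sibuyaPGF, sub_sub_cancel, Real.mul_rpow hμ (Real.rpow_nonneg h1z _),
    Real.rpow_mul h1z]
  ring

/-- The exponent of `λ` is the geometric sum `1 + α + ⋯ + α^{s-1}`. -/
theorem iterate_sibuyaPGF {lam α : ℝ} (hlam : 0 < lam) (hα : α ≠ 1) (s : ℕ) {z : ℝ}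
    (hz : z ≤ 1) :
    (sibuyaPGF lam α)^[s] z = sibuyaPGF (lam ^ ((1 - α ^ s) / (1 - α))) (α ^ s) z := by
  induction s with
  | zero => simp [sibuyaPGF]
  | succ s ih =>
    have hexp : (1 - α ^ (s + 1)) / (1 - α) = 1 + (1 - α ^ s) / (1 - α) * α := by
      field_simp [sub_ne_zero.2 hα.symm]
      ring
    rw [Function.iterate_succ_apply', ih, sibuyaPGF_comp (by positivity) hz,
      ← Real.rpow_mul hlam.le, hexp, Real.rpow_add hlam, Real.rpow_one, pow_succ]

theorem iterate_sibuyaPGF_eventuallyEq {lam α : ℝ} (hlam : 0 < lam) (hα : α ≠ 1) (s : ℕ)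
    {z : ℝ} (hz : z < 1) :
    (sibuyaPGF lam α)^[s] =ᶠ[𝓝 z] sibuyaPGF (lam ^ ((1 - α ^ s) / (1 - α))) (α ^ s) :=
  eventually_of_mem (Iio_mem_nhds hz) fun _ hw => iterate_sibuyaPGF hlam hα s (le_of_lt hw)

theorem hasDerivAt_one_sub_rpow (α : ℝ) {z : ℝ} (hz : z < 1) :
    HasDerivAt (fun w => (1 - w) ^ α) (-(α * (1 - z) ^ (α - 1))) z := by
  simpa using ((hasDerivAt_id z).const_sub 1).rpow_const (p := α) (Or.inl (sub_ne_zero.2 hz.ne'))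

theorem hasDerivAt_sibuyaPGF (lam α : ℝ) {z : ℝ} (hz : z < 1) :
    HasDerivAt (sibuyaPGF lam α) (lam * α * (1 - z) ^ (α - 1)) z := by
  exact (((hasDerivAt_one_sub_rpow α hz).const_mul lam).const_sub 1).congr_deriv (by ring)

theorem deriv_sibuyaPGF_eventuallyEq (lam α : ℝ) {z : ℝ} (hz : z < 1) :
    deriv (sibuyaPGF lam α) =ᶠ[𝓝 z] fun w => lam * α * (1 - w) ^ (α - 1) :=
  eventually_of_mem (Iio_mem_nhds hz) fun _ hw => (hasDerivAt_sibuyaPGF lam α hw).deriv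

theorem iteratedDeriv_two_sibuyaPGF (lam α : ℝ) {z : ℝ} (hz : z < 1) :
    iteratedDeriv 2 (sibuyaPGF lam α) z = lam * α * (1 - α) * (1 - z) ^ (α - 2) := by
  rw [iteratedDeriv_succ, iteratedDeriv_one, (deriv_sibuyaPGF_eventuallyEq lam α hz).deriv_eq,
    ((hasDerivAt_one_sub_rpow (α - 1) hz).const_mul (lam * α)).deriv, sub_sub, one_add_one_eq_two]
  ring

theorem one_sub_mul_iteratedDeriv_two_div_deriv_sibuyaPGF {lam α z : ℝ} (hlam : lam ≠ 0)
    (hα : α ≠ 0) (hz : z < 1) :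
    (1 - z) * (iteratedDeriv 2 (sibuyaPGF lam α) z / deriv (sibuyaPGF lam α) z) = 1 - α := by
  have h1z : 0 < 1 - z := by linarith
  rw [iteratedDeriv_two_sibuyaPGF lam α hz, (hasDerivAt_sibuyaPGF lam α hz).deriv,
    show α - 2 = (α - 1) - 1 by ring, Real.rpow_sub_one h1z.ne']
  field_simp [(Real.rpow_pos_of_pos h1z (α - 1)).ne']

theorem continuous_sibuyaPGF (lam : ℝ) {α : ℝ} (hα : 0 ≤ α) :
    Continuous (sibuyaPGF lam α) :=
  continuous_const.sub <| continuous_const.mul <|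
    (Real.continuous_rpow_const hα).comp (continuous_const.sub continuous_id)

theorem integral_pow_mul_deriv_sibuyaPGF (lam : ℝ) {α : ℝ} (hα : 0 < α) (n : ℕ) :
    n * ∫ z in (0:ℝ)..1, sibuyaPGF lam α z ^ (n - 1) * (lam * α * (1 - z) ^ (α - 1)) =
      1 - (1 - lam) ^ n := by
  have hint : IntervalIntegrable (fun z : ℝ => (1 - z) ^ (α - 1)) volume 0 1 := by
    simpa using ((intervalIntegral.intervalIntegrable_rpow' (a := 0) (b := 1)
      (by linarith : -1 < α - 1)).comp_sub_left 1).symm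
  have hcont := continuous_sibuyaPGF lam hα.le
  rw [← intervalIntegral.integral_const_mul,
    intervalIntegral.integral_eq_sub_of_hasDeriv_right_of_le zero_le_one
      (f := fun z => sibuyaPGF lam α z ^ n) (hcont.pow n).continuousOn
      (fun z hz => (((hasDerivAt_sibuyaPGF lam α hz.2).pow n).congr_deriv
        (mul_assoc _ _ _)).hasDerivWithinAt)
      (((hint.const_mul (lam * α)).continuousOn_mul
        (hcont.pow (n - 1)).continuousOn).const_mul _)]
  simp [sibuyaPGF, Real.zero_rpow hα.ne']

theorem tail_integral_iterate_sibuyaPGF {lam α : ℝ} (hlam : 0 < lam) (hα₀ : 0 < α)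
    (hα₁ : α ≠ 1) (n s t : ℕ) :
    n * ∫ z in (0:ℝ)..1, (1 - z) * (iteratedDeriv 2 ((sibuyaPGF lam α)^[s]) z /
        deriv ((sibuyaPGF lam α)^[s]) z) * deriv ((sibuyaPGF lam α)^[t]) z *
        ((sibuyaPGF lam α)^[t] z) ^ (n - 1) =
      (1 - α ^ s) * (1 - (1 - lam ^ ((1 - α ^ t) / (1 - α))) ^ n) := by
  set Lt := lam ^ ((1 - α ^ t) / (1 - α))
  have hratio : ∀ z < 1, (1 - z) * (iteratedDeriv 2 ((sibuyaPGF lam α)^[s]) z /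
      deriv ((sibuyaPGF lam α)^[s]) z) = 1 - α ^ s := fun z hz => by
    have h := iterate_sibuyaPGF_eventuallyEq hlam hα₁ s hz
    rw [(h.iteratedDeriv 2).eq_of_nhds, h.deriv_eq]
    exact one_sub_mul_iteratedDeriv_two_div_deriv_sibuyaPGF
      (Real.rpow_pos_of_pos hlam _).ne' (pow_pos hα₀ s).ne' hz
  rw [intervalIntegral.integral_congr_Ioo_of_le zero_le_one (g := fun z => (1 - α ^ s) *
      (sibuyaPGF Lt (α ^ t) z ^ (n - 1) * (Lt * α ^ t * (1 - z) ^ (α ^ t - 1)))),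
    intervalIntegral.integral_const_mul, mul_left_comm,
    integral_pow_mul_deriv_sibuyaPGF _ (pow_pos hα₀ t)]
  intro z hz
  have h := iterate_sibuyaPGF_eventuallyEq hlam hα₁ t hz.2
  dsimp only
  rw [hratio z hz.2, h.deriv_eq, (hasDerivAt_sibuyaPGF _ _ hz.2).deriv, h.eq_of_nhds]
  ring

/-- Sibuya BGW, `φ(z) = 1-λ(1-z)^α`, `n₀` founders.  With
`λ_t = λ^{(1-α^t)/(1-α)}` and the integral representation
`T k = n₀ ∫₀¹ (1-z)(φ_{t-k}''/φ_{t-k}') φ_t' φ_t^{n₀-1} dz` of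
`P(∞ > τ₂,₁^{(t)}(n₀) ≥ k)`, one has
`T k = (1-α^{t-k})(1-(1-λ_t)^{n₀})` for `0 ≤ k ≤ t-1`, hence
`P(τ < ∞) = T 0 = (1-(1-λ_t)^{n₀})(1-α^t)` and
`P(τ = k | τ < ∞) = (T k - T (k+1))/T 0 = α^{t-k-1}(1-α)/(1-α^t)`. -/
theorem stmt_16 (α lam : ℝ) (hα : α ∈ Set.Ioo (0:ℝ) 1) (hlam : lam ∈ Set.Ioc (0:ℝ) 1)
    (n₀ t : ℕ) (hn₀ : 1 ≤ n₀) (ht : 1 ≤ t) :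
    let φ : ℝ → ℝ := fun w => 1 - lam * (1 - w) ^ α
    let lamt : ℝ := lam ^ ((1 - α ^ t) / (1 - α))
    let T : ℕ → ℝ := fun k => (n₀ : ℝ) * ∫ z in (0:ℝ)..1,
      (1 - z) * (iteratedDeriv 2 (φ^[t - k]) z / deriv (φ^[t - k]) z) *
        deriv (φ^[t]) z * (φ^[t] z) ^ (n₀ - 1)
    (∀ k ≤ t - 1, T k = (1 - α ^ (t - k)) * (1 - (1 - lamt) ^ n₀)) ∧
    T 0 = (1 - (1 - lamt) ^ n₀) * (1 - α ^ t) ∧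
    (∀ k ≤ t - 1, (T k - T (k + 1)) / T 0 = α ^ (t - k - 1) * (1 - α) / (1 - α ^ t)) := by
  obtain ⟨hα₀, hα₁⟩ := hα
  obtain ⟨hlam₀, hlam₁⟩ := hlam
  intro φ lamt T
  have hT (k : ℕ) : T k = (1 - α ^ (t - k)) * (1 - (1 - lamt) ^ n₀) :=
    tail_integral_iterate_sibuyaPGF hlam₀ hα₀ hα₁.ne n₀ (t - k) t
  have hαt : 1 - α ^ t ≠ 0 := (sub_pos.2 (pow_lt_one₀ hα₀.le hα₁ (by omega))).ne'
  have hS : 1 - (1 - lamt) ^ n₀ ≠ 0 := by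
    have hlamt₀ : 0 < lamt := Real.rpow_pos_of_pos hlam₀ _
    have hlamt₁ : lamt ≤ 1 :=
      Real.rpow_le_one hlam₀.le hlam₁
        (div_nonneg (sub_nonneg.2 (pow_le_one₀ hα₀.le hα₁.le)) (by linarith))
    exact (sub_pos.2 (pow_lt_one₀ (by linarith) (by linarith) (by omega))).ne'
  refine ⟨fun k _ => hT k, by rw [hT, Nat.sub_zero, mul_comm], fun k hk => ?_⟩
  obtain ⟨j, hj⟩ : ∃ j, t - k = j + 1 := ⟨t - k - 1, by omega⟩
  rw [hT, hT, hT, Nat.sub_zero, show t - k - 1 = j by omega, hj, show t - (k + 1) = j by omega]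
  field_simp
  ring
end

section
/- For the Sibuya BGW process with one founder (φ(z) = 1−λ(1−z)^α), the TMRCA of the whole population conditioned on size i satisfies P(τ_{i,1}^{(t)}(1) ≥ k | N_t(1) = i) = [1−α^{t−k}]_{i−1}/[1−α^t]_{i−1} for i ≥ 1 and 0 ≤ k ≤ t−1, where [a]_j is the rising factorial. -/
/-!
The maps `z ↦ 1 - c (1 - z) ^ a` on `z ≤ 1` are closed under composition, so the `s`-th iterate
of `φ` is `φ_s(z) = 1 - λ_s (1 - z) ^ (α ^ s)` with `λ_s = λ ^ (1 + α + ⋯ + α ^ (s - 1))`.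
Expanding `(1 - z) ^ β` by the binomial series and comparing coefficients (the generating
function of `N_s(1)` is analytic at `0` and agrees with `φ_s` on `(0, 1)`) gives
`P(N_s(1) = i) = λ_s α ^ s [1 - α ^ s]_{i-1} / i!` for `i ≥ 1` and `P(N_s(1) = 0) = 1 - λ_s`.
With `φ_k'(z) = λ_k α ^ k (1 - z) ^ (α ^ k - 1)`, the quotient collapses by
`λ_k λ_{t-k} ^ (α ^ k) = λ_t` and `α ^ k α ^ (t - k) = α ^ t`.
-/

open Set Filter Topology Finset FormalMultilinearSeries

section ScalarSeries

variable {𝕜 : Type*} [NontriviallyNormedField 𝕜]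

theorem ofScalars_eq_of_frequently_eq {a b : ℕ → 𝕜} {f g : 𝕜 → 𝕜} {x : 𝕜}
    (hf : HasFPowerSeriesAt f (ofScalars 𝕜 a) x)
    (hg : HasFPowerSeriesAt g (ofScalars 𝕜 b) x) (h : ∃ᶠ z in 𝓝[≠] x, f z = g z) : a = b :=
  ofScalars_series_injective 𝕜 𝕜 <| hf.eq_formalMultilinearSeries_of_eventually hg <|
    (hf.analyticAt.frequently_eq_iff_eventually_eq hg.analyticAt).mp h

theorem hasFPowerSeriesAt_tsum_of_norm_le [CompleteSpace 𝕜] {p : ℕ → 𝕜} {C : ℝ} (hp : ∀ n, ‖p n‖ ≤ C) :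
    HasFPowerSeriesAt (fun z => ∑' n, p n * z ^ n) (ofScalars 𝕜 p) 0 := by
  have hr : (1 : ENNReal) ≤ (ofScalars 𝕜 p).radius :=
    (ofScalars 𝕜 p).le_radius_of_bound C fun n => by simpa [ofScalars_norm] using hp n
  exact (ofScalarsSum_eq_tsum (E := 𝕜) p) ▸
    ((ofScalars 𝕜 p).hasFPowerSeriesOnBall (zero_lt_one.trans_le hr)).hasFPowerSeriesAt

theorem constFormalMultilinearSeries_eq_ofScalars (c : 𝕜) :
    constFormalMultilinearSeries 𝕜 𝕜 c = ofScalars 𝕜 (Pi.single 0 c) := by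
  ext n
  cases n <;> simp [ofScalars]

end ScalarSeries

theorem neg_one_pow_mul_prod_sub_range_succ {R : Type*} [CommRing R] (β : R) (m : ℕ) :
    (-1) ^ (m + 1) * ∏ j ∈ range (m + 1), (β - j) = -(β * ∏ j ∈ range m, (1 - β + j)) := by
  induction m with
  | zero => simp
  | succ m ih =>
    rw [prod_range_succ (fun j : ℕ => β - j) (m + 1), prod_range_succ (fun j : ℕ => 1 - β + j) m,
      pow_succ]
    push_cast
    linear_combination (-(β - (m + 1))) * ih

namespace Sibuya

noncomputable def coeff (μ β : ℝ) : ℕ → ℝ :=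
  Pi.single 0 1 - μ • fun n => (-1) ^ n * Ring.choose β n

theorem hasFPowerSeriesAt_coeff (μ β : ℝ) :
    HasFPowerSeriesAt (fun z => 1 - μ * (1 - z) ^ β) (ofScalars ℝ (coeff μ β)) 0 := by
  have h := ((neg_zero (G := ℝ)).symm ▸ Real.one_add_rpow_hasFPowerSeriesAt_zero (a := β))
    |>.compContinuousLinearMap (u := -ContinuousLinearMap.id ℝ ℝ) (x := 0)
  rw [binomialSeries, ofScalars_comp_neg_id] at h
  rw [coeff, ofScalars_sub, ofScalars_smul, ← constFormalMultilinearSeries_eq_ofScalars]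
  convert hasFPowerSeriesAt_const.sub (h.const_smul (c := μ)) using 1
  funext z
  simp [sub_eq_add_neg]

theorem coeff_zero (μ β : ℝ) : coeff μ β 0 = 1 - μ := by
  simp [coeff]

theorem coeff_succ (μ β : ℝ) (m : ℕ) :
    coeff μ β (m + 1) = μ * β * (∏ j ∈ range m, (1 - β + j)) / (m + 1).factorial := by
  have hchoose : Ring.choose β (m + 1) = (∏ j ∈ range (m + 1), (β - j)) / (m + 1).factorial := by
    rw [Ring.choose_eq_smul, ← Polynomial.aeval_eq_smeval, Polynomial.aeval_def,
      ← Polynomial.eval_map, descPochhammer_map, descPochhammer_eval_eq_prod_range, smul_eq_mul,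
      inv_mul_eq_div]
  simp only [coeff, Pi.sub_apply, Pi.smul_apply, smul_eq_mul, hchoose, mul_div_assoc',
    neg_one_pow_mul_prod_sub_range_succ, Pi.single_apply, Nat.succ_ne_zero, if_false]
  ring

theorem eq_coeff_of_tsum_eq {p : ℕ → ℝ} (hp : ∀ n, ‖p n‖ ≤ 1) {μ β : ℝ}
    (h : ∀ z ∈ Ioo (0 : ℝ) 1, ∑' n, p n * z ^ n = 1 - μ * (1 - z) ^ β) : p = coeff μ β := by
  refine ofScalars_eq_of_frequently_eq (hasFPowerSeriesAt_tsum_of_norm_le hp)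
    (hasFPowerSeriesAt_coeff μ β) ?_
  have hGT : ∀ᶠ z in 𝓝[>] (0 : ℝ), ∑' n, p n * z ^ n = 1 - μ * (1 - z) ^ β :=
    eventually_of_mem (Ioo_mem_nhdsGT zero_lt_one) h
  exact hGT.frequently.filter_mono (nhdsWithin_mono _ fun z hz => ne_of_gt hz)

theorem one_sub_mul_one_sub_rpow_comp {c d a b z : ℝ} (hd : 0 ≤ d) (hz : z ≤ 1) :
    1 - c * (1 - (1 - d * (1 - z) ^ b)) ^ a = 1 - c * d ^ a * (1 - z) ^ (a * b) := by
  have hz' : 0 ≤ 1 - z := sub_nonneg.mpr hz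
  rw [sub_sub_cancel, Real.mul_rpow hd (Real.rpow_nonneg hz' b), ← Real.rpow_mul hz', mul_comm b,
    mul_assoc]

theorem hasDerivAt_one_sub_mul_one_sub_rpow (c a : ℝ) {z : ℝ} (hz : z < 1) :
    HasDerivAt (fun w => 1 - c * (1 - w) ^ a) (c * a * (1 - z) ^ (a - 1)) z := by
  have h := (((hasDerivAt_id' z).const_sub 1).rpow_const (p := a)
    (Or.inl (sub_ne_zero.mpr hz.ne'))).const_mul c |>.const_sub 1
  exact h.congr_deriv (by ring)

/-- `λ_s = λ ^ (1 + α + ⋯ + α ^ (s - 1)) = λ ^ ((1 - α ^ s) / (1 - α))`. -/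
noncomputable def scale (α lam : ℝ) (s : ℕ) : ℝ := lam ^ ∑ j ∈ range s, α ^ j

variable {α lam : ℝ}

theorem scale_pos (hlam : 0 < lam) (s : ℕ) : 0 < scale α lam s :=
  Real.rpow_pos_of_pos hlam _

theorem scale_add (hlam : 0 < lam) (k s : ℕ) :
    scale α lam (k + s) = scale α lam k * scale α lam s ^ α ^ k := by
  rw [scale, scale, scale, ← Real.rpow_mul hlam.le, ← Real.rpow_add hlam, sum_range_add,
    sum_mul]
  simp only [pow_add, mul_comm]

theorem iterate_eq (hlam : 0 < lam) (s : ℕ) {z : ℝ} (hz : z ≤ 1) :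
    (fun w => 1 - lam * (1 - w) ^ α)^[s] z = 1 - scale α lam s * (1 - z) ^ α ^ s := by
  induction s with
  | zero => simp [scale]
  | succ s ih =>
    rw [Function.iterate_succ_apply', ih, one_sub_mul_one_sub_rpow_comp (scale_pos hlam s).le hz,
      ← pow_succ', scale, scale, sum_range_succ', pow_zero, Real.rpow_add hlam, Real.rpow_one,
      ← Real.rpow_mul hlam.le, sum_mul, mul_comm lam]
    simp only [pow_succ]

theorem deriv_iterate (hlam : 0 < lam) (k : ℕ) {z : ℝ} (hz : z < 1) :
    deriv (fun w => 1 - lam * (1 - w) ^ α)^[k] z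
      = scale α lam k * α ^ k * (1 - z) ^ (α ^ k - 1) := by
  have heq : (fun w => 1 - lam * (1 - w) ^ α)^[k] =ᶠ[𝓝 z]
      fun w => 1 - scale α lam k * (1 - w) ^ α ^ k :=
    eventually_of_mem (Iio_mem_nhds hz) fun w hw => iterate_eq hlam k (le_of_lt hw)
  rw [heq.deriv_eq, (hasDerivAt_one_sub_mul_one_sub_rpow _ _ hz).deriv]

end Sibuya

open Sibuya

/-- Sibuya BGW, one founder, laws `ν s` of `N_s(1)` with pgf the
`s`-iterate of `φ(z) = 1-λ(1-z)^α`.  For `i ≥ 1`, `0 ≤ k ≤ t-1`,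
`P(τ_{i,1}^{(t)}(1) ≥ k | N_t(1)=i) = φ_k'(P(N_{t-k}=0)) P(N_{t-k}=i)/P(N_t=i)
  = [1-α^{t-k}]_{i-1} / [1-α^t]_{i-1}` (rising factorials). -/
theorem stmt_18 (α lam : ℝ) (hα : α ∈ Set.Ioo (0:ℝ) 1) (hlam : lam ∈ Set.Ioc (0:ℝ) 1)
    (t k i : ℕ) (ht : 1 ≤ t) (hk : k ≤ t - 1) (hi : 1 ≤ i)
    (ν : ℕ → PMF ℕ)
    (hν : ∀ s : ℕ, ∀ z ∈ Set.Icc (0:ℝ) 1,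
      (∑' n : ℕ, (ν s n).toReal * z ^ n) = (fun w => 1 - lam * (1 - w) ^ α)^[s] z) :
    deriv ((fun w => 1 - lam * (1 - w) ^ α)^[k]) ((ν (t - k) 0).toReal) *
        (ν (t - k) i).toReal / (ν t i).toReal
      = (∏ j ∈ Finset.range (i - 1), (1 - α ^ (t - k) + (j : ℝ))) /
          (∏ j ∈ Finset.range (i - 1), (1 - α ^ t + (j : ℝ))) := by
  obtain ⟨hα0, hα1⟩ := hα
  obtain ⟨m, rfl⟩ : ∃ m, i = m + 1 := ⟨i - 1, by omega⟩
  obtain ⟨s, hs, rfl⟩ : ∃ s, 1 ≤ s ∧ t = k + s := ⟨t - k, by omega, by omega⟩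
  have hlaw (s : ℕ) : (fun n => (ν s n).toReal) = coeff (scale α lam s) (α ^ s) := by
    refine eq_coeff_of_tsum_eq (fun n => ?_) fun z hz => ?_
    · rw [Real.norm_of_nonneg ENNReal.toReal_nonneg]
      exact ENNReal.toReal_le_of_le_ofReal zero_le_one (by simpa using (ν s).coe_le_one n)
    · rw [hν s z (Ioo_subset_Icc_self hz), iterate_eq hlam.1 s hz.2.le]
  have hμ := scale_pos (α := α) hlam.1
  have hP (u : ℕ) (hu : 1 ≤ u) : 0 < ∏ j ∈ range m, (1 - α ^ u + (j : ℝ)) :=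
    prod_pos fun j _ =>
      add_pos_of_pos_of_nonneg (sub_pos.mpr (pow_lt_one₀ hα0.le hα1 (by omega))) j.cast_nonneg
  rw [Nat.add_sub_cancel_left, Nat.add_sub_cancel, congrFun (hlaw s) 0, coeff_zero,
    deriv_iterate hlam.1 k (by linarith [hμ s]), sub_sub_cancel, congrFun (hlaw s) (m + 1),
    congrFun (hlaw (k + s)) (m + 1), coeff_succ, coeff_succ, scale_add hlam.1, pow_add,
    Real.rpow_sub_one (hμ s).ne']
  have hPs := hP s hs
  have hPt := pow_add α k s ▸ hP (k + s) (by omega)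
  have hμk := hμ k
  have hμs := hμ s
  have hμsk := Real.rpow_pos_of_pos (hμ s) (α ^ k)
  field_simp
end

section
/- For the Sibuya BGW process with one founder, the coalescence time of the whole surviving generation-t population satisfies P(τ_{N_t(1),1}^{(t)}(1) ≥ k | N_t(1) > 0) = α^k for all 0 ≤ k ≤ t−1; hence P(τ_{N_t(1),1}^{(t)}(1) = k | N_t(1) > 0) = (1−α)α^k for k = 0,...,t−2 and equals α^{t−1} for k = t−1 (a truncated geometric(α) law). -/
/-!
The maps `w ↦ 1 - c (1 - w) ^ a` are closed under composition on `w ≤ 1`: composing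
parameters `(c, a)` after `(d, b)` gives `(c d ^ a, b a)`. Hence the `k`-th iterate of the
Sibuya generating function is again of this form, with coefficient `λ_k = λ ^ (1 + α + ⋯ + α ^ (k-1))`
and exponent `α ^ k`, and `λ_{k+s} = λ_k λ_s ^ (α ^ k)`. Differentiating the closed form,
`(λ_{t-k} / λ_t) · φ_k'(1 - λ_{t-k}) = (λ_{t-k} / λ_t) · α ^ k λ_k λ_{t-k} ^ (α ^ k - 1) = α ^ k`.
-/

open Finset

namespace Sibuya

noncomputable def pgf (c a w : ℝ) : ℝ := 1 - c * (1 - w) ^ a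

noncomputable def iterCoeff (c a : ℝ) (k : ℕ) : ℝ := c ^ ∑ i ∈ range k, a ^ i

variable {c a : ℝ}

lemma pgf_comp {d b w : ℝ} (hd : 0 ≤ d) (hw : w ≤ 1) :
    pgf c a (pgf d b w) = pgf (c * d ^ a) (b * a) w := by
  have hw' : 0 ≤ 1 - w := by linarith
  simp only [pgf, sub_sub_cancel]
  rw [Real.mul_rpow hd (Real.rpow_nonneg hw' b), ← Real.rpow_mul hw', mul_assoc]

lemma iterCoeff_pos (hc : 0 < c) (k : ℕ) : 0 < iterCoeff c a k :=
  Real.rpow_pos_of_pos hc _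

lemma iterCoeff_succ (hc : 0 < c) (k : ℕ) :
    iterCoeff c a (k + 1) = c * iterCoeff c a k ^ a := by
  rw [iterCoeff, iterCoeff, geom_sum_succ, Real.rpow_add hc, Real.rpow_one,
    ← Real.rpow_mul hc.le, mul_comm a, mul_comm]

lemma iterCoeff_add (hc : 0 < c) (k s : ℕ) :
    iterCoeff c a (k + s) = iterCoeff c a k * iterCoeff c a s ^ a ^ k := by
  have hexp : ∑ i ∈ range (k + s), a ^ i = ∑ i ∈ range k, a ^ i + ∑ i ∈ range s, a ^ i * a ^ k := by
    simp only [sum_range_add, pow_add, mul_comm (a ^ k)]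
  rw [iterCoeff, iterCoeff, iterCoeff, hexp, Real.rpow_add hc, ← Real.rpow_mul hc.le, sum_mul]

lemma iterate_pgf_apply (hc : 0 < c) {w : ℝ} (hw : w ≤ 1) (k : ℕ) :
    (pgf c a)^[k] w = pgf (iterCoeff c a k) (a ^ k) w := by
  induction k with
  | zero => simp [pgf, iterCoeff]
  | succ k ih =>
    rw [Function.iterate_succ_apply', ih, pgf_comp (iterCoeff_pos hc k).le hw,
      iterCoeff_succ hc, pow_succ]

lemma iterate_pgf_zero (hc : 0 < c) (k : ℕ) :
    (pgf c a)^[k] 0 = 1 - iterCoeff c a k := by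
  simp [iterate_pgf_apply hc zero_le_one, pgf]

lemma hasDerivAt_pgf {w : ℝ} (hw : w < 1) :
    HasDerivAt (pgf c a) (c * a * (1 - w) ^ (a - 1)) w := by
  have h : HasDerivAt (pgf c a) (-(c * (a * (1 - w) ^ (a - 1) * -1))) w :=
    (((Real.hasDerivAt_rpow_const (Or.inl (sub_pos.2 hw).ne')).comp w
      ((hasDerivAt_id w).const_sub 1)).const_mul c).const_sub 1
  convert h using 1
  ring

lemma deriv_iterate_pgf (hc : 0 < c) {w : ℝ} (hw : w < 1) (k : ℕ) :
    deriv (pgf c a)^[k] w = iterCoeff c a k * a ^ k * (1 - w) ^ (a ^ k - 1) := by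
  have heq : (pgf c a)^[k] =ᶠ[nhds w] pgf (iterCoeff c a k) (a ^ k) := by
    filter_upwards [eventually_le_nhds hw] with v hv
    exact iterate_pgf_apply hc hv k
  rw [heq.deriv_eq, (hasDerivAt_pgf hw).deriv]

theorem tail_eq_pow (hc : 0 < c) {k t : ℕ} (hk : k ≤ t) :
    (1 - (pgf c a)^[t - k] 0) / (1 - (pgf c a)^[t] 0) * deriv (pgf c a)^[k] ((pgf c a)^[t - k] 0)
      = a ^ k := by
  obtain ⟨s, rfl⟩ := Nat.exists_eq_add_of_le hk
  set q := iterCoeff c a s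
  have hq : 0 < q := iterCoeff_pos hc s
  have hqt : 0 < iterCoeff c a (k + s) := iterCoeff_pos hc _
  rw [Nat.add_sub_cancel_left, iterate_pgf_zero hc, iterate_pgf_zero hc,
    deriv_iterate_pgf hc (by linarith), sub_sub_cancel, sub_sub_cancel]
  calc q / iterCoeff c a (k + s) * (iterCoeff c a k * a ^ k * q ^ (a ^ k - 1))
      = a ^ k * (iterCoeff c a k * q ^ a ^ k) / iterCoeff c a (k + s) := by
        rw [Real.rpow_sub_one hq.ne']
        field_simp
    _ = a ^ k := by rw [← iterCoeff_add hc, mul_div_assoc, div_self hqt.ne', mul_one]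

end Sibuya

theorem stmt_19_general (α lam : ℝ) (hlam : lam ∈ Set.Ioc (0:ℝ) 1)
    (t : ℕ) (ht : 1 ≤ t) :
    let φ : ℝ → ℝ := fun w => 1 - lam * (1 - w) ^ α
    let E : ℕ → ℝ := fun k =>
      ((1 - φ^[t - k] 0) / (1 - φ^[t] 0)) * deriv (φ^[k]) (φ^[t - k] 0)
    (∀ k ≤ t - 1, E k = α ^ k) ∧
    (∀ k ≤ t - 2, E k - E (k + 1) = (1 - α) * α ^ k) ∧
    E (t - 1) = α ^ (t - 1) := by
  intro φ E
  have hE : ∀ k ≤ t, E k = α ^ k := fun k hk => Sibuya.tail_eq_pow hlam.1 hk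
  refine ⟨fun k hk => hE k (by omega), fun k hk => ?_, hE (t - 1) (by omega)⟩
  rw [hE k (by omega), hE (k + 1) (by omega)]
  ring

/-- Sibuya BGW, one founder.  With
`E k = [P(N_{t-k}>0)/P(N_t>0)] · φ_k'(P(N_{t-k}=0))` (general formula for
`P(τ_{N_t(1),1}^{(t)}(1) ≥ k | N_t(1)>0)`, where `P(N_s=0)=φ_s(0)`):
`E k = α^k` for `0 ≤ k ≤ t-1`; hence the masses are `(1-α)α^k` for `k ≤ t-2`
and `α^{t-1}` at `k = t-1` (truncated geometric(α) law). -/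
theorem stmt_19 (α lam : ℝ) (hα : α ∈ Set.Ioo (0:ℝ) 1) (hlam : lam ∈ Set.Ioc (0:ℝ) 1)
    (t : ℕ) (ht : 1 ≤ t) :
    let φ : ℝ → ℝ := fun w => 1 - lam * (1 - w) ^ α
    let E : ℕ → ℝ := fun k =>
      ((1 - φ^[t - k] 0) / (1 - φ^[t] 0)) * deriv (φ^[k]) (φ^[t - k] 0)
    (∀ k ≤ t - 1, E k = α ^ k) ∧
    (∀ k ≤ t - 2, E k - E (k + 1) = (1 - α) * α ^ k) ∧
    E (t - 1) = α ^ (t - 1) :=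
  stmt_19_general α lam hlam t ht
end
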